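/- arXiv:2510.07101 — 5 statements merged into one kernel-verified Lean document; each statement's English description precedes it below -/
import Mathlib

section
/- For every integer N ≥ 3, the function K(p,N) := (p - p^N)/(1 - p^N - (1-p)^N) is strictly increasing in p on the interval (0,1), and takes values in (1/N, 1 - 1/N). -/
noncomputable def K (p : ℝ) (N : ℕ) : ℝ :=
  (p - p ^ N) / (1 - p ^ N - (1 - p) ^ N)

noncomputable def Sgeo (N : ℕ) (x : ℝ) : ℝ := ∑ k ∈ Finset.range (N - 1), x ^ k

lemma factor_aux (N : ℕ) (hN : 1 ≤ N) (x : ℝ) :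
    x - x ^ N = x * (1 - x) * Sgeo N x := by
  obtain ⟨m, rfl⟩ := Nat.exists_eq_add_of_le hN
  simp only [Sgeo, Nat.add_sub_cancel_left]
  linear_combination x * geom_sum_mul x m

lemma Sgeo_ge (N : ℕ) (hN : 3 ≤ N) {x : ℝ} (hx : 0 < x) : 1 + x ≤ Sgeo N x := by
  have hsub : ({0, 1} : Finset ℕ) ⊆ Finset.range (N - 1) := by
    intro i hi
    simp only [Finset.mem_insert, Finset.mem_singleton] at hi
    rcases hi with rfl | rfl <;> simp [Finset.mem_range] <;> omega
  have := Finset.sum_le_sum_of_subset_of_nonneg hsub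
    (fun i _ _ => pow_nonneg hx.le i)
  simpa [Sgeo] using this

lemma Sgeo_lt (N : ℕ) (hN : 3 ≤ N) {x : ℝ} (hx : 0 < x) (hx1 : x < 1) :
    Sgeo N x < (N : ℝ) - 1 := by
  have h : Sgeo N x < ∑ _k ∈ Finset.range (N - 1), (1 : ℝ) := by
    apply Finset.sum_lt_sum
    · exact fun i _ => pow_le_one₀ hx.le hx1.le
    · exact ⟨1, Finset.mem_range.mpr (by omega), by simpa using hx1⟩
  have hcard : ∑ _k ∈ Finset.range (N - 1), (1 : ℝ) = (N : ℝ) - 1 := by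
    simp [Nat.cast_sub (by omega : 1 ≤ N)]
  linarith [h, hcard.le]

lemma Sgeo_mono (N : ℕ) (hN : 3 ≤ N) {x y : ℝ} (hx : 0 ≤ x) (hxy : x < y) :
    Sgeo N x < Sgeo N y := by
  apply Finset.sum_lt_sum
  · exact fun i _ => pow_le_pow_left₀ hx hxy.le i
  · exact ⟨1, Finset.mem_range.mpr (by omega), by
      simpa using pow_lt_pow_left₀ hxy hx one_ne_zero⟩

lemma K_eq (N : ℕ) (hN : 3 ≤ N) {p : ℝ} (hp : p ∈ Set.Ioo (0:ℝ) 1) :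
    K p N = Sgeo N p / (Sgeo N p + Sgeo N (1 - p)) := by
  obtain ⟨hp0, hp1⟩ := hp
  have hN1 : 1 ≤ N := by omega
  have hA := factor_aux N hN1 p
  have hB := factor_aux N hN1 (1 - p)
  have hden : 1 - p ^ N - (1 - p) ^ N
      = p * (1 - p) * (Sgeo N p + Sgeo N (1 - p)) := by
    linear_combination hA + hB
  have hne : p * (1 - p) ≠ 0 := ne_of_gt (mul_pos hp0 (by linarith))
  rw [K, hA, hden, mul_div_mul_left _ _ hne]

theorem K_strictMono_and_range (N : ℕ) (hN : 3 ≤ N) :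
    StrictMonoOn (fun p => K p N) (Set.Ioo (0:ℝ) 1) ∧
    ∀ p ∈ Set.Ioo (0:ℝ) 1, K p N ∈ Set.Ioo (1 / (N : ℝ)) (1 - 1 / (N : ℝ)) := by
  have hNR : (3 : ℝ) ≤ (N : ℝ) := by exact_mod_cast hN
  constructor
  · intro p hp q hq hpq
    simp only
    rw [K_eq N hN hp, K_eq N hN hq]
    obtain ⟨hp0, hp1⟩ := hp
    obtain ⟨hq0, hq1⟩ := hq
    set a := Sgeo N p with ha
    set b := Sgeo N (1 - p) with hb
    set c := Sgeo N q with hc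
    set d := Sgeo N (1 - q) with hd
    have hac : a < c := Sgeo_mono N hN hp0.le hpq
    have hdb : d < b := Sgeo_mono N hN (by linarith) (by linarith)
    have ha1 : 1 + p ≤ a := Sgeo_ge N hN hp0
    have hd1 : 1 + (1 - q) ≤ d := Sgeo_ge N hN (by linarith)
    have hapos : 0 < a := by linarith
    have hdpos : 0 < d := by linarith
    have hbpos : 0 < b := by linarith
    have hcpos : 0 < c := by linarith
    rw [div_lt_div_iff₀ (by linarith) (by linarith)]
    nlinarith [mul_lt_mul'' hac hdb hapos.le hdpos.le]
  · intro p hp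
    rw [K_eq N hN hp]
    obtain ⟨hp0, hp1⟩ := hp
    have ha1 : 1 + p ≤ Sgeo N p := Sgeo_ge N hN hp0
    have hb1 : 1 + (1 - p) ≤ Sgeo N (1 - p) := Sgeo_ge N hN (by linarith)
    have ha2 : Sgeo N p < (N : ℝ) - 1 := Sgeo_lt N hN hp0 hp1
    have hb2 : Sgeo N (1 - p) < (N : ℝ) - 1 := Sgeo_lt N hN (by linarith) (by linarith)
    set a := Sgeo N p
    set b := Sgeo N (1 - p)
    have hapos : 0 < a := by linarith
    have hbpos : 0 < b := by linarith
    have hNpos : (0 : ℝ) < (N : ℝ) := by linarith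
    constructor
    · rw [div_lt_div_iff₀ hNpos (by linarith)]
      nlinarith [mul_pos (show (0:ℝ) < (N:ℝ) - 1 by linarith) (show (0:ℝ) < a - 1 by linarith)]
    · have h1 : (1 : ℝ) - 1 / (N : ℝ) = ((N : ℝ) - 1) / (N : ℝ) := by
        field_simp
      rw [h1, div_lt_div_iff₀ (by linarith) hNpos]
      nlinarith [mul_pos (show (0:ℝ) < (N:ℝ) - 1 by linarith) (show (0:ℝ) < b - 1 by linarith)]
end

section
/- For every integer N ≥ 3, every p ∈ (0,1), and every ρ ∈ [0,1], the quantity Q_N(ρ,p) := (1 + N(p-1) - 2p)(ρ - 1) p^N + ρ((1-p)^N - 1) + p(-p + (2 + (N-2)(1-p)^N) ρ) is strictly negative. -/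
noncomputable def Q (N : ℕ) (ρ p : ℝ) : ℝ :=
  (1 + (N : ℝ) * (p - 1) - 2 * p) * (ρ - 1) * p ^ N + ρ * ((1 - p) ^ N - 1)
    + p * (-p + (2 + ((N : ℝ) - 2) * (1 - p) ^ N) * ρ)

lemma Q_three (ρ p : ℝ) : Q 3 ρ p = -(p ^ 2 * (1 - p) ^ 2) := by
  simp only [Q]
  push_cast
  ring

lemma Q_diff (N : ℕ) (ρ p : ℝ) :
    Q (N + 1) ρ p - Q N ρ p
      = -(((N : ℝ) - 1) * ((1 - ρ) * (1 - p) ^ 2 * p ^ N + ρ * p ^ 2 * (1 - p) ^ N)) := by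
  simp only [Q]
  push_cast
  ring

theorem Q_neg (N : ℕ) (hN : 3 ≤ N) (p : ℝ) (hp : 0 < p) (hp1 : p < 1)
    (ρ : ℝ) (hρ : ρ ∈ Set.Icc (0:ℝ) 1) :
    Q N ρ p < 0 := by
  obtain ⟨hρ0, hρ1⟩ := hρ
  induction N with
  | zero => omega
  | succ n ih =>
    rcases Nat.lt_or_ge n 3 with h | h
    · interval_cases n
      · omega
      · omega
      · rw [Q_three]
        have h1 : 0 < 1 - p := by linarith
        have : 0 < p ^ 2 * (1 - p) ^ 2 := by positivity
        linarith
    · have hQn := ih h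
      have hd := Q_diff n ρ p
      have h1p : (0:ℝ) < 1 - p := by linarith
      have hnn : (0:ℝ) ≤ ((n : ℝ) - 1) * ((1 - ρ) * (1 - p) ^ 2 * p ^ n + ρ * p ^ 2 * (1 - p) ^ n) := by
        have hn1 : (0:ℝ) ≤ (n : ℝ) - 1 := by
          have : (1:ℝ) ≤ (n : ℝ) := by exact_mod_cast (by omega : 1 ≤ n)
          linarith
        have h1ρ : (0:ℝ) ≤ 1 - ρ := by linarith
        apply mul_nonneg hn1
        apply add_nonneg
        · exact mul_nonneg (mul_nonneg h1ρ (by positivity)) (by positivity)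
        · exact mul_nonneg (mul_nonneg hρ0 (by positivity)) (by positivity)
      linarith
end

section
/- For every integer N ≥ 3 and every p ∈ (0,1), the function W_N(p) := p^{N+1} + (N - p)(1 - (1-p)^N) - pN is strictly positive. -/
theorem W_pos (N : ℕ) (hN : 3 ≤ N) (p : ℝ) (hp : 0 < p) (hp1 : p < 1) :
    0 < p ^ (N + 1) + ((N : ℝ) - p) * (1 - (1 - p) ^ N) - p * (N : ℝ) := by
  have h1 : (0:ℝ) < 1 - p := by linarith
  induction N, hN using Nat.le_induction with
  | base =>
    norm_num
    nlinarith [mul_pos hp (mul_pos h1 h1)]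
  | succ n hn ih =>
    have ih' := ih
    have hb : (1 - p) ^ n < 1 - p := by
      have := pow_lt_pow_right_of_lt_one₀ h1 (by linarith) (show 1 < n by omega)
      simpa using this
    have ha : p ^ n ≤ p := by
      have := pow_le_pow_of_le_one hp.le hp1.le (show 1 ≤ n by omega)
      simpa using this
    have hbn : (0:ℝ) < (1 - p) ^ n := pow_pos h1 n
    have hpn : (0:ℝ) < p ^ n := pow_pos hp n
    have hcast : ((n:ℝ) + 1) = ((n + 1 : ℕ) : ℝ) := by push_cast; ring
    push_cast
    rw [show n + 1 + 1 = n + 2 from rfl, pow_succ, pow_succ, pow_succ]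
    have hap : p ^ n * p ≤ p * p := mul_le_mul_of_nonneg_right ha hp.le
    have hnp : (0:ℝ) < (n:ℝ) - p := by
      have : (3:ℝ) ≤ n := by exact_mod_cast hn
      linarith
    have key : 0 < (1 - p) * (1 - (1 - p) ^ n - p ^ n * p) +
        (1 - p) ^ n * p * ((n:ℝ) - p) := by
      have h2 : (0:ℝ) < 1 - (1 - p) ^ n - p ^ n * p := by nlinarith
      have := mul_pos h1 h2
      have := mul_pos (mul_pos hbn hp) hnp
      linarith
    rw [pow_succ] at ih
    nlinarith [ih, key]
end

section
/- Let N ≥ 3 and define ρ₂↓(p,N) := -p(-p^N + N(p-1) + 1) / (p(p^N + (1-p)^N - 1) - N((1-p)^N + p - 1)) for p ∈ (0,1). Then lim_{p→0} ρ₂↓(p,N) = 1/N and lim_{p→1} ρ₂↓(p,N) = (N-1)/(N+1). -/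
open Filter

noncomputable def rhoDown (p : ℝ) (N : ℕ) : ℝ :=
  -p * (-p ^ N + (N : ℝ) * (p - 1) + 1)
    / (p * (p ^ N + (1 - p) ^ N - 1) - (N : ℝ) * ((1 - p) ^ N + p - 1))

theorem rhoDown_limits (N : ℕ) (hN : 3 ≤ N) :
    Tendsto (fun p => rhoDown p N) (nhdsWithin 0 (Set.Ioo (0:ℝ) 1))
      (nhds (1 / (N : ℝ))) ∧
    Tendsto (fun p => rhoDown p N) (nhdsWithin 1 (Set.Ioo (0:ℝ) 1))
      (nhds (((N : ℝ) - 1) / ((N : ℝ) + 1))) := by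
  have hN3 : (3:ℝ) ≤ (N:ℝ) := by exact_mod_cast hN
  constructor
  · -- limit at 0
    set F : ℝ → ℝ := fun p => p ^ N - (N:ℝ) * (p - 1) - 1 with hF
    set G : ℝ → ℝ := fun p =>
      p ^ N + (1 - p) ^ N - 1 - (N:ℝ) + (N:ℝ) * ∑ i ∈ Finset.range N, (1 - p) ^ i with hG
    have heq : (fun p => F p / G p) =ᶠ[nhdsWithin (0:ℝ) (Set.Ioo (0:ℝ) 1)]
        (fun p => rhoDown p N) := by
      filter_upwards [self_mem_nhdsWithin] with p hp
      symm
      have hp0 : p ≠ 0 := ne_of_gt hp.1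
      have hgeom : (1 - p) ^ N - 1 = -p * ∑ i ∈ Finset.range N, (1 - p) ^ i := by
        linear_combination (-1 : ℝ) * geom_sum_mul (1 - p) N
      have hnum : -p * (-p ^ N + (N : ℝ) * (p - 1) + 1) = p * F p := by
        simp only [hF]; ring
      have hden : p * (p ^ N + (1 - p) ^ N - 1) - (N : ℝ) * ((1 - p) ^ N + p - 1)
          = p * G p := by
        simp only [hG]; linear_combination (-(N:ℝ)) * hgeom
      rw [rhoDown, hnum, hden, mul_div_mul_left _ _ hp0]
    have hGcont : Continuous G := by
      simp only [hG]; continuity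
    have hFcont : Continuous F := by
      simp only [hF]; continuity
    have hG0 : G 0 = (N:ℝ) * (N:ℝ) - (N:ℝ) := by
      simp only [hG]
      have h0 : (0:ℝ) ^ N = 0 := by
        apply zero_pow; omega
      simp [h0]
      ring
    have hF0 : F 0 = (N:ℝ) - 1 := by
      simp only [hF]
      have h0 : (0:ℝ) ^ N = 0 := by apply zero_pow; omega
      simp [h0]
    have hG0ne : G 0 ≠ 0 := by rw [hG0]; nlinarith
    have hlim : Tendsto (fun p => F p / G p) (nhdsWithin 0 (Set.Ioo (0:ℝ) 1))
        (nhds (F 0 / G 0)) := by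
      exact Tendsto.div ((hFcont.tendsto 0).mono_left nhdsWithin_le_nhds)
        ((hGcont.tendsto 0).mono_left nhdsWithin_le_nhds) hG0ne
    have hval : F 0 / G 0 = 1 / (N:ℝ) := by
      rw [hF0, hG0]
      have hNne : (N:ℝ) ≠ 0 := by linarith
      have h1 : (N:ℝ) * (N:ℝ) - (N:ℝ) ≠ 0 := by nlinarith
      rw [div_eq_div_iff h1 hNne]
      ring
    rw [← hval]
    exact hlim.congr' heq
  · -- limit at 1
    set S2 : ℝ → ℝ := fun p => ∑ i ∈ Finset.range N, ∑ j ∈ Finset.range i, p ^ j with hS2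
    set H : ℝ → ℝ := fun p =>
      (∑ i ∈ Finset.range N, ∑ j ∈ Finset.range (i + 1), p ^ j)
        + (p - (N:ℝ)) * (1 - p) ^ (N - 2) with hH
    have key : ∀ p : ℝ,
        (p ^ N - 1 - (N:ℝ) * (p - 1) = (p - 1) ^ 2 * S2 p) ∧
        (p * (p ^ N + (1 - p) ^ N - 1) - (N : ℝ) * ((1 - p) ^ N + p - 1)
          = (p - 1) ^ 2 * H p) := by
      intro p
      have h2 : (∑ i ∈ Finset.range N, p ^ i) - (N:ℝ) = (p - 1) * S2 p := by
        have e1 : (∑ i ∈ Finset.range N, p ^ i) - (N:ℝ)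
            = ∑ i ∈ Finset.range N, (p ^ i - 1) := by
          rw [Finset.sum_sub_distrib, Finset.sum_const, Finset.card_range,
            nsmul_eq_mul, mul_one]
        rw [e1]
        have e2 : ∀ i ∈ Finset.range N, p ^ i - 1
            = (∑ j ∈ Finset.range i, p ^ j) * (p - 1) := fun i _ =>
          (geom_sum_mul p i).symm
        rw [Finset.sum_congr rfl e2, ← Finset.sum_mul]
        simp only [hS2]; ring
      have h3 : p * (∑ i ∈ Finset.range N, p ^ i) - (N:ℝ)
          = (p - 1) * ∑ i ∈ Finset.range N, ∑ j ∈ Finset.range (i + 1), p ^ j := by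
        have e1 : p * (∑ i ∈ Finset.range N, p ^ i) - (N:ℝ)
            = ∑ i ∈ Finset.range N, (p ^ (i + 1) - 1) := by
          rw [Finset.sum_sub_distrib, Finset.sum_const, Finset.card_range,
            nsmul_eq_mul, mul_one, Finset.mul_sum]
          congr 1
          exact Finset.sum_congr rfl fun i _ => (pow_succ' p i).symm
        rw [e1]
        have e2 : ∀ i ∈ Finset.range N, p ^ (i + 1) - 1
            = (∑ j ∈ Finset.range (i + 1), p ^ j) * (p - 1) := fun i _ =>
          (geom_sum_mul p (i + 1)).symm
        rw [Finset.sum_congr rfl e2, ← Finset.sum_mul]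
        ring
      have hNpow : (1 - p) ^ N = (1 - p) ^ (N - 2) * (1 - p) ^ 2 := by
        rw [← pow_add]; congr 1; omega
      constructor
      · linear_combination (-1 : ℝ) * geom_sum_mul p N + (p - 1) * h2
      · simp only [hH]
        linear_combination (-p) * geom_sum_mul p N + (p - 1) * h3 + (p - (N:ℝ)) * hNpow
    have heq : (fun p => (p * S2 p) / H p) =ᶠ[nhdsWithin (1:ℝ) (Set.Ioo (0:ℝ) 1)]
        (fun p => rhoDown p N) := by
      filter_upwards [self_mem_nhdsWithin] with p hp
      symm
      have hp1 : (p - 1) ^ 2 ≠ 0 := pow_ne_zero _ (sub_ne_zero.mpr (ne_of_lt hp.2))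
      have hnum : -p * (-p ^ N + (N : ℝ) * (p - 1) + 1)
          = (p - 1) ^ 2 * (p * S2 p) := by
        linear_combination p * (key p).1
      rw [rhoDown, hnum, (key p).2, mul_div_mul_left _ _ hp1]
    have hS2cont : Continuous S2 := by
      simp only [hS2]; continuity
    have hHcont : Continuous H := by
      simp only [hH]; continuity
    have hs2 : (∑ i ∈ Finset.range N, (i:ℝ)) * 2 = (N:ℝ) * ((N:ℝ) - 1) := by
      have h := Finset.sum_range_id_mul_two N
      have hc : ((∑ i ∈ Finset.range N, i : ℕ) : ℝ) * 2 = ((N * (N - 1) : ℕ) : ℝ) := by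
        exact_mod_cast congrArg (Nat.cast : ℕ → ℝ) h
      rw [Nat.cast_sum] at hc
      rw [hc]
      push_cast [Nat.cast_sub (by omega : 1 ≤ N)]
      ring
    have hS21 : S2 1 = ∑ i ∈ Finset.range N, (i:ℝ) := by
      simp [hS2]
    have hH1 : H 1 = (∑ i ∈ Finset.range N, (i:ℝ)) + (N:ℝ) := by
      have h0 : (0:ℝ) ^ (N - 2) = 0 := by apply zero_pow; omega
      simp [hH, h0, Finset.sum_add_distrib]
    have hH1ne : H 1 ≠ 0 := by
      rw [hH1]
      have hnn : (0:ℝ) ≤ ∑ i ∈ Finset.range N, (i:ℝ) :=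
        Finset.sum_nonneg fun i _ => by positivity
      nlinarith
    have hlim : Tendsto (fun p => (p * S2 p) / H p) (nhdsWithin 1 (Set.Ioo (0:ℝ) 1))
        (nhds ((1 * S2 1) / H 1)) := by
      exact Tendsto.div
        (((continuous_id.mul hS2cont).tendsto 1).mono_left nhdsWithin_le_nhds)
        ((hHcont.tendsto 1).mono_left nhdsWithin_le_nhds) hH1ne
    have hval : (1 * S2 1) / H 1 = ((N:ℝ) - 1) / ((N:ℝ) + 1) := by
      rw [one_mul, hS21, hH1]
      set s := ∑ i ∈ Finset.range N, (i:ℝ) with hs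
      have hsn : s + (N:ℝ) ≠ 0 := by
        have hnn : (0:ℝ) ≤ s := Finset.sum_nonneg fun i _ => by positivity
        nlinarith
      have hn1 : (N:ℝ) + 1 ≠ 0 := by nlinarith
      field_simp
      linear_combination hs2
    rw [← hval]
    exact hlim.congr' heq
end

section
/- For N ≥ 3, p ∈ (0,1), ρ̂ ∈ [0,1], and q ∈ [0,1], the expected payoff U(q) := q{ρ̂(1-(1-p)^{N-1})/p + (1-ρ̂)(p^{N-1}-1)/(1-p)} + (1-ρ̂)(1-p^N)/(1-p) + ρ̂(1-p)^{N-1} - 1 can be rewritten as U(q) = (q - p)·[ρ̂ - (p - p^N)/(1 - p^N - (1-p)^N)]·(1 - p^N - (1-p)^N)/(p(1-p)). -/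
theorem payoff_factored (N : ℕ) (hN : 3 ≤ N) (p ρ q : ℝ)
    (hp : p ∈ Set.Ioo (0:ℝ) 1) (hρ : ρ ∈ Set.Icc (0:ℝ) 1) (hq : q ∈ Set.Icc (0:ℝ) 1) :
    q * (ρ * (1 - (1 - p) ^ (N - 1)) / p + (1 - ρ) * (p ^ (N - 1) - 1) / (1 - p))
      + (1 - ρ) * (1 - p ^ N) / (1 - p) + ρ * (1 - p) ^ (N - 1) - 1
    = (q - p) * (ρ - (p - p ^ N) / (1 - p ^ N - (1 - p) ^ N))
        * ((1 - p ^ N - (1 - p) ^ N) / (p * (1 - p))) := by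
  obtain ⟨hp0, hp1⟩ := hp
  obtain ⟨m, rfl⟩ : ∃ m, N = m + 1 := ⟨N - 1, by omega⟩
  have hm : 1 ≤ m := by omega
  have hps : p ^ m < 1 := pow_lt_one₀ hp0.le hp1 (by omega)
  have hqs : (1 - p) ^ m < 1 := pow_lt_one₀ (by linarith) (by linarith) (by omega)
  have hD : (1:ℝ) - p ^ (m+1) - (1 - p) ^ (m+1) > 0 := by
    have h1 : p ^ (m+1) < p := by
      calc p ^ (m+1) = p ^ m * p := by ring
        _ < 1 * p := by nlinarith [pow_pos hp0 m]
        _ = p := by ring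
    have h2 : (1 - p) ^ (m+1) < 1 - p := by
      have := pow_pos (show (0:ℝ) < 1 - p by linarith) m
      calc (1-p) ^ (m+1) = (1-p) ^ m * (1-p) := by ring
        _ < 1 * (1-p) := by nlinarith
        _ = 1 - p := by ring
    linarith
  have hDne : (1:ℝ) - p ^ (m+1) - (1 - p) ^ (m+1) ≠ 0 := ne_of_gt hD
  have hpe : (m + 1) - 1 = m := by omega
  rw [hpe]
  have e1 : p ^ (m+1) = p ^ m * p := by ring
  have e2 : (1 - p) ^ (m+1) = (1 - p) ^ m * (1 - p) := by ring
  rw [e1, e2] at hDne ⊢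
  have hp0' : p ≠ 0 := ne_of_gt hp0
  have h1p : (1:ℝ) - p ≠ 0 := by linarith
  set D := (1:ℝ) - p ^ m * p - (1 - p) ^ m * (1 - p) with hDdef
  field_simp
  rw [hDdef]
  ring
end
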